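/- arXiv:math/0011133 — 3 statements merged into one kernel-verified Lean document; each statement's English description precedes it below -/
import Mathlib

section
/- Fredholm alternative, first case: if A = B + F with B an isomorphism of a Hilbert space H and F finite-rank, and if ker(A) = {0}, then A is surjective, and hence A is an isomorphism. -/
/-!
Composing with `B⁻¹` reduces to an injective `T = 1 + K` with `K` of finite rank. `T` maps the
finite-dimensional space `R = range K` into itself, so it is bijective on `R`; and for any `y`,
`T y - y ∈ R`, so subtracting a `T`-preimage in `R` of `T y - y` from `y` gives a preimage of `y`.
Bijectivity then yields a continuous inverse by the open mapping theorem.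
-/

open Function LinearMap

namespace LinearMap

variable {K V W : Type*} [DivisionRing K] [AddCommGroup V] [Module K V] [AddCommGroup W]
  [Module K W]

theorem surjective_of_injective_of_finiteDimensional_range_sub_id (f : V →ₗ[K] V)
    [FiniteDimensional K (range (f - id))] (hf : Injective f) : Surjective f := by
  set R := range (f - id)
  have hf_mapsTo : ∀ v ∈ R, f v ∈ R := fun v hv ↦ by
    simpa using R.add_mem hv (mem_range_self (f - id) v)
  have hR_surj : Surjective (f.restrict hf_mapsTo) :=
    LinearMap.surjective_of_injective fun v w hvw ↦ Subtype.ext (hf congr(($hvw : V)))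
  intro y
  obtain ⟨w, hw⟩ := hR_surj ⟨f y - y, mem_range_self (f - id) y⟩
  have hfw : f w = f y - y := by simpa using congr(($hw : V))
  exact ⟨y - w, by rw [map_sub, hfw, sub_sub_cancel]⟩

theorem surjective_equiv_add_of_injective (e : V ≃ₗ[K] W) (k : V →ₗ[K] W)
    [FiniteDimensional K (range k)] (h : Injective (e.toLinearMap + k)) :
    Surjective (e.toLinearMap + k) := by
  set f := e.symm.toLinearMap ∘ₗ (e.toLinearMap + k)
  have hf_sub : f - id = e.symm.toLinearMap ∘ₗ k := by
    ext v
    simp [f]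
  have : FiniteDimensional K (range (f - id)) := by
    rw [hf_sub, range_comp]
    infer_instance
  have hf : Surjective f :=
    surjective_of_injective_of_finiteDimensional_range_sub_id f (e.symm.injective.comp h)
  exact (e.symm.toEquiv.comp_surjective _).mp hf

end LinearMap

theorem fredholm_alternative_injective_case
    {H : Type*} [NormedAddCommGroup H] [InnerProductSpace ℂ H] [CompleteSpace H]
    (B : H ≃L[ℂ] H) (F : H →L[ℂ] H)
    (hF : FiniteDimensional ℂ (LinearMap.range (F : H →ₗ[ℂ] H)))
    (A : H →L[ℂ] H) (hA : A = (B : H →L[ℂ] H) + F)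
    (hker : LinearMap.ker (A : H →ₗ[ℂ] H) = ⊥) :
    Function.Surjective A ∧ ∃ E : H ≃L[ℂ] H, (E : H →L[ℂ] H) = A := by
  have hA_lin : (A : H →ₗ[ℂ] H) = B.toLinearEquiv.toLinearMap + F := by
    rw [hA]
    rfl
  have hA_surj : Surjective (A : H →ₗ[ℂ] H) := by
    rw [hA_lin] at hker ⊢
    exact surjective_equiv_add_of_injective _ _ (ker_eq_bot.mp hker)
  exact ⟨hA_surj, ContinuousLinearEquiv.ofBijective A hker (range_eq_top.mpr hA_surj),
    ContinuousLinearEquiv.coe_ofBijective _ _ _⟩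
end

section
/- Fredholm alternative, solvability criterion: if A = B + F with B an isomorphism of a Hilbert space H and F finite-rank, then for f ∈ H the equation A u = f has a solution if and only if ⟨f, ψ⟩ = 0 for every ψ ∈ ker(A*). -/
/-!
Modulo finite-rank operators, `B⁻¹` is a quasi-inverse of `A = B + F`, so `A` is Fredholm and in
particular has closed range. For a closed range, `range A = (range A)ᗮᗮ = (ker A*)ᗮ`.
-/

open scoped InnerProductSpace LinearMap.FiniteRangeSetoid
open ContinuousLinearMap

namespace ContinuousLinearMap

section Fredholm

variable {𝕜 E F : Type*} [NontriviallyNormedField 𝕜] [CompleteSpace 𝕜]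
  [AddCommGroup E] [Module 𝕜 E] [TopologicalSpace E] [IsTopologicalAddGroup E]
  [ContinuousSMul 𝕜 E] [T2Space E]
  [AddCommGroup F] [Module 𝕜 F] [TopologicalSpace F] [IsTopologicalAddGroup F]
  [ContinuousSMul 𝕜 F] [T2Space F]

theorem IsFredholm.add_of_hasNoetherianRange {u k : E →L[𝕜] F} (hu : IsFredholm u)
    (hk : (k : E →ₗ[𝕜] F).HasNoetherianRange) : IsFredholm (u + k) := by
  obtain ⟨v, hv⟩ := hu.exists_isQuasiInverse
  refine .of_isQuasiInverse (v := v) (hv.congr (Setoid.refl _) ?_)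
  rw [LinearMap.FiniteRangeSetoid.equiv_iff_hasNoetherianRange]
  simpa using hk

theorem _root_.ContinuousLinearEquiv.isFredholm (e : E ≃L[𝕜] F) : IsFredholm (e : E →L[𝕜] F) :=
  .of_isQuasiInverse (v := (e.symm : F →L[𝕜] E)) e.toLinearEquiv.isQuasiInverse

end Fredholm

variable {𝕜 E F : Type*} [RCLike 𝕜]
  [NormedAddCommGroup E] [InnerProductSpace 𝕜 E] [CompleteSpace E]
  [NormedAddCommGroup F] [InnerProductSpace 𝕜 F] [CompleteSpace F]

theorem range_eq_orthogonal_ker_adjoint {T : E →L[𝕜] F} (hT : IsClosed (T.range : Set F)) :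
    T.range = (adjoint T).kerᗮ := by
  rw [← T.orthogonal_range, Submodule.orthogonal_orthogonal_eq_closure,
    hT.submodule_topologicalClosure_eq]

end ContinuousLinearMap

theorem fredholm_alternative_solvability
    {H : Type*} [NormedAddCommGroup H] [InnerProductSpace ℂ H] [CompleteSpace H]
    (B : H ≃L[ℂ] H) (F : H →L[ℂ] H)
    (hF : FiniteDimensional ℂ (LinearMap.range (F : H →ₗ[ℂ] H)))
    (A : H →L[ℂ] H) (hA : A = (B : H →L[ℂ] H) + F) (f : H) :
    (∃ u : H, A u = f) ↔ ∀ ψ ∈ LinearMap.ker (adjoint A : H →ₗ[ℂ] H), ⟪f, ψ⟫_ℂ = 0 := by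
  have hA_fredholm : IsFredholm A := hA ▸ B.isFredholm.add_of_hasNoetherianRange
    (LinearMap.hasNoetherianRange_iff_range.mpr inferInstance)
  rw [← Submodule.mem_orthogonal', ← range_eq_orthogonal_ker_adjoint hA_fredholm.isClosed_range]
  exact LinearMap.mem_range.symm
end

section
/- If T is a bounded finite-rank operator on a Hilbert space H, then dim ker(I + T) = dim ker(I + T*). -/
/-!
Every solution of `x + T x = 0` lies in `range T`, and every solution of `x + T* x = 0` in
`range T*`; the latter equals `T* (range T)` because `T*` kills `(range T)ᗮ`. So both kernels
lie in the finite-dimensional subspace `V = range T + range T*`, which is invariant under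
`T` and `T*`. On `V` the restrictions of `I + T` and `I + T*` are adjoint to each other, and in
finite dimension a map and its adjoint have the same nullity, by rank–nullity and
`rank A* = rank A`.
-/

open ContinuousLinearMap

section

variable {R M : Type*} [Ring R] [AddCommGroup M] [Module R M]

theorem LinearMap.ker_one_add_le_range (f : M →ₗ[R] M) :
    LinearMap.ker (1 + f) ≤ LinearMap.range f := by
  intro x hx
  refine ⟨-x, ?_⟩
  rw [map_neg, neg_eq_iff_eq_neg, eq_neg_iff_add_eq_zero, add_comm]
  simpa using hx

theorem LinearMap.finrank_ker_restrict_of_ker_le {f : M →ₗ[R] M} {p : Submodule R M}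
    (hf : ∀ x ∈ p, f x ∈ p) (hker : LinearMap.ker f ≤ p) :
    Module.finrank R (LinearMap.ker (f.restrict hf)) = Module.finrank R (LinearMap.ker f) := by
  rw [LinearMap.ker_restrict]
  exact (Submodule.comapSubtypeEquivOfLe hker).finrank_eq

end

section

variable {𝕜 E F : Type*} [RCLike 𝕜] [NormedAddCommGroup E] [InnerProductSpace 𝕜 E]
  [NormedAddCommGroup F] [InnerProductSpace 𝕜 F]

theorem LinearMap.finrank_ker_adjoint [FiniteDimensional 𝕜 E] (A : E →ₗ[𝕜] E) :
    Module.finrank 𝕜 (LinearMap.ker A.adjoint) = Module.finrank 𝕜 (LinearMap.ker A) := by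
  have := A.finrank_range_add_finrank_ker
  have := A.adjoint.finrank_range_add_finrank_ker
  have := A.finrank_range_adjoint
  omega

namespace ContinuousLinearMap

variable [CompleteSpace E] [CompleteSpace F]

theorem range_adjoint_eq_map_range (T : E →L[𝕜] F) [T.range.HasOrthogonalProjection] :
    (adjoint T).range = T.range.map (adjoint T : F →ₗ[𝕜] E) := by
  rw [LinearMap.range_eq_map, ← T.range.sup_orthogonal_of_hasOrthogonalProjection,
    Submodule.map_sup, orthogonal_range]
  exact sup_eq_left.2 (Submodule.map_le_iff_le_comap.2 (LinearMap.ker_le_comap _))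

theorem restrict_adjoint_eq_adjoint_restrict (S : E →L[𝕜] E) {V : Submodule 𝕜 E}
    [FiniteDimensional 𝕜 V] (hS : ∀ x ∈ V, S x ∈ V) (hS' : ∀ x ∈ V, adjoint S x ∈ V) :
    (adjoint S : E →ₗ[𝕜] E).restrict hS' = ((S : E →ₗ[𝕜] E).restrict hS).adjoint :=
  (LinearMap.eq_adjoint_iff _ _).2 fun x y ↦ adjoint_inner_left S y x

theorem finrank_ker_adjoint_of_ker_le (S : E →L[𝕜] E) {V : Submodule 𝕜 E}
    [FiniteDimensional 𝕜 V] (hS : ∀ x ∈ V, S x ∈ V) (hS' : ∀ x ∈ V, adjoint S x ∈ V)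
    (hker : S.ker ≤ V) (hker' : (adjoint S).ker ≤ V) :
    Module.finrank 𝕜 (adjoint S).ker = Module.finrank 𝕜 S.ker := by
  rw [← LinearMap.finrank_ker_restrict_of_ker_le hS' hker',
    restrict_adjoint_eq_adjoint_restrict S hS hS', LinearMap.finrank_ker_adjoint,
    LinearMap.finrank_ker_restrict_of_ker_le hS hker]

end ContinuousLinearMap

end

theorem ker_dim_eq_ker_adjoint_dim
    {H : Type*} [NormedAddCommGroup H] [InnerProductSpace ℂ H] [CompleteSpace H]
    (T : H →L[ℂ] H) (hfin : FiniteDimensional ℂ (LinearMap.range (T : H →ₗ[ℂ] H))) :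
    Module.finrank ℂ (LinearMap.ker (((1 : H →L[ℂ] H) + T : H →L[ℂ] H) : H →ₗ[ℂ] H)) =
      Module.finrank ℂ (LinearMap.ker (((1 : H →L[ℂ] H) + adjoint T : H →L[ℂ] H) : H →ₗ[ℂ] H)) := by
  have : FiniteDimensional ℂ (adjoint T).range := by
    rw [range_adjoint_eq_map_range]
    infer_instance
  set V := T.range ⊔ (adjoint T).range
  have maps_to {A : H →L[ℂ] H} (hA : A.range ≤ V) : ∀ x ∈ V, (1 + A) x ∈ V :=
    fun x hx ↦ V.add_mem hx (hA ⟨x, rfl⟩)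
  have ker_le {A : H →L[ℂ] H} (hA : A.range ≤ V) : (1 + A).ker ≤ V := by
    simpa using (LinearMap.ker_one_add_le_range (A : H →ₗ[ℂ] H)).trans hA
  have adjoint_one_add : adjoint (1 + T) = 1 + adjoint T := by rw [map_add, adjoint_one]
  rw [← adjoint_one_add]
  exact (finrank_ker_adjoint_of_ker_le (1 + T) (maps_to le_sup_left)
    (adjoint_one_add ▸ maps_to le_sup_right) (ker_le le_sup_left)
    (adjoint_one_add ▸ ker_le le_sup_right)).symm
end
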